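/- arXiv:1902.07628 — 2 statements merged into one kernel-verified Lean document; each statement's English description precedes it below -/
import Mathlib

section
/- Let H_m be a parity-check matrix of the q-ary Hamming code of length n_m = (q^m-1)/(q-1), written in the form [H*_u | H_{u,m}] where H*_u consists of the n_u = (q^u-1)/(q-1) columns whose last m-u entries are zero and whose first u entries form a parity-check matrix of the Hamming code H_u (1 ≤ u ≤ m-1). Then every nonzero codeword of the code generated by the rows of H_{u,m} (i.e., the dual of the supplementary code B_{u,m}) has weight either q^{m-1} or q^{m-1} - q^{u-1}. -/
open Finset

section Helpers
variable {F : Type} [Field F] [Fintype F] [DecidableEq F]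
set_option linter.unusedSectionVars false

/-- The linear functional `w ↦ ∑ i, c i * w i`. -/
private def dotMap {k : ℕ} (c : Fin k → F) : (Fin k → F) →ₗ[F] F where
  toFun w := ∑ i, c i * w i
  map_add' x y := by simp [mul_add, Finset.sum_add_distrib]
  map_smul' a x := by simp [Finset.mul_sum, mul_left_comm]

private lemma dotMap_surj {k : ℕ} (c : Fin k → F) (hc : c ≠ 0) :
    Function.Surjective (dotMap c) := by
  obtain ⟨i0, hi0⟩ : ∃ i, c i ≠ 0 := by
    by_contra h; push_neg at h; exact hc (funext h)
  intro x
  refine ⟨Pi.single i0 ((c i0)⁻¹ * x), ?_⟩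
  simp only [dotMap, LinearMap.coe_mk, AddHom.coe_mk]
  rw [Finset.sum_eq_single i0]
  · simp [Pi.single_eq_same, ← mul_assoc, mul_inv_cancel₀ hi0]
  · intro b _ hb; simp [Pi.single_eq_of_ne hb]
  · simp

private lemma card_dot_eq_zero {k : ℕ} (c : Fin k → F) (hc : c ≠ 0) :
    ((univ : Finset (Fin k → F)).filter fun w => ∑ i, c i * w i = 0).card
      = Fintype.card F ^ (k - 1) := by
  obtain ⟨i0, _⟩ : ∃ i, c i ≠ 0 := by
    by_contra h; push_neg at h; exact hc (funext h)
  have hk : 1 ≤ k := Nat.one_le_iff_ne_zero.mpr (by rintro rfl; exact absurd i0.2 (by simp))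
  have h1 : Nat.card (Fin k → F) = Nat.card (LinearMap.ker (dotMap c)) * Nat.card ((Fin k → F) ⧸ LinearMap.ker (dotMap c)) :=
    Submodule.card_eq_card_quotient_mul_card _
  have h2 : Nat.card ((Fin k → F) ⧸ LinearMap.ker (dotMap c)) = Nat.card F :=
    Nat.card_congr (LinearMap.quotKerEquivOfSurjective _ (dotMap_surj c hc)).toEquiv
  have h3 : Nat.card (Fin k → F) = Fintype.card F ^ k := by
    simp [Nat.card_eq_fintype_card]
  have h4 : Nat.card (LinearMap.ker (dotMap c))
      = ((univ : Finset (Fin k → F)).filter fun w => ∑ i, c i * w i = 0).card := by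
    have := Nat.card_congr (Equiv.subtypeEquivRight
      (fun w => by simp [LinearMap.mem_ker, dotMap] :
        ∀ w : Fin k → F, w ∈ LinearMap.ker (dotMap c) ↔ ∑ i, c i * w i = 0))
    rw [this, Nat.card_eq_fintype_card, Fintype.card_subtype]
  rw [h2, h3, h4, Nat.card_eq_fintype_card] at h1
  have hq0 : 0 < Fintype.card F := Fintype.card_pos
  apply Nat.eq_of_mul_eq_mul_right hq0
  rw [← h1, ← pow_succ, Nat.sub_add_cancel hk]

private lemma card_dot_ne_zero {k : ℕ} (c : Fin k → F) (hc : c ≠ 0) :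
    ((univ : Finset (Fin k → F)).filter fun w => ∑ i, c i * w i ≠ 0).card
      = Fintype.card F ^ k - Fintype.card F ^ (k - 1) := by
  have h : ((univ : Finset (Fin k → F)).filter fun w => ¬ (∑ i, c i * w i = 0))
      = univ \ ((univ : Finset (Fin k → F)).filter fun w => ∑ i, c i * w i = 0) :=
    Finset.filter_not _ _
  rw [h, Finset.card_sdiff_of_subset (Finset.filter_subset _ _), card_dot_eq_zero c hc]
  simp [card_univ]

private lemma card_scalar_biUnion {m : ℕ} {J : Type} [DecidableEq J]
    (col : J → Fin m → F) (hcols : ∀ j, col j ≠ 0)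
    (hindep : ∀ j k : J, j ≠ k → ∀ a : F, (fun i => a * col j i) ≠ col k)
    (S : Finset J) :
    (S.biUnion fun j => ((univ : Finset F).filter (· ≠ 0)).image
        fun a => (fun i => a * col j i)).card
      = S.card * (Fintype.card F - 1) := by
  rw [Finset.card_biUnion]
  · have hc : ∀ j, (((univ : Finset F).filter (· ≠ 0)).image
        fun a => (fun i => a * col j i)).card = Fintype.card F - 1 := by
      intro j
      rw [Finset.card_image_of_injOn, Finset.filter_ne', Finset.card_erase_of_mem (mem_univ 0),
        card_univ]
      intro a _ b _ hab
      obtain ⟨i, hi⟩ := Function.ne_iff.mp (hcols j)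
      exact mul_right_cancel₀ hi (congrFun hab i)
    simp only [hc, Finset.sum_const, smul_eq_mul]
  · intro j _ k _ hjk
    rw [Function.onFun, Finset.disjoint_left]
    rintro w hwj hwk
    simp only [mem_image, mem_filter, mem_univ, true_and] at hwj hwk
    obtain ⟨a, ha, rfl⟩ := hwj
    obtain ⟨b, hb, hw⟩ := hwk
    apply hindep j k hjk (b⁻¹ * a)
    funext i
    have := congrFun hw i
    rw [mul_assoc, ← this, ← mul_assoc, inv_mul_cancel₀ hb, one_mul]

/-- extend a vector on `Fin u` by zero to `Fin m`. -/
private def extMap (u m : ℕ) (w' : Fin u → F) : Fin m → F :=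
  fun i => if h : (i : ℕ) < u then w' ⟨i, h⟩ else 0

private lemma extMap_castLE {u m : ℕ} (hum : u ≤ m) (w' : Fin u → F) (i' : Fin u) :
    extMap u m w' (Fin.castLE hum i') = w' i' := by
  simp only [extMap, Fin.coe_castLE, i'.isLt, dif_pos]

private lemma extMap_inj {u m : ℕ} (hum : u ≤ m) :
    Function.Injective (extMap (F := F) u m) := by
  intro a b hab
  funext i'
  have := congrFun hab (Fin.castLE hum i')
  rwa [extMap_castLE hum, extMap_castLE hum] at this

private lemma extMap_supported {u m : ℕ} (w' : Fin u → F) (i : Fin m) (h : u ≤ (i : ℕ)) :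
    extMap u m w' i = 0 := by
  simp only [extMap, dif_neg (by omega : ¬ (i : ℕ) < u)]

private lemma eq_extMap_of_supported {u m : ℕ} (hum : u ≤ m) (w : Fin m → F)
    (hw : ∀ i : Fin m, u ≤ (i : ℕ) → w i = 0) :
    w = extMap u m (fun i' => w (Fin.castLE hum i')) := by
  funext i
  by_cases h : (i : ℕ) < u
  · simp only [extMap, dif_pos h]
    congr 1
  · rw [extMap_supported _ _ (by omega), hw i (by omega)]

private lemma dot_extMap {u m : ℕ} (hum : u ≤ m) (c : Fin m → F) (w' : Fin u → F) :
    ∑ i, c i * extMap u m w' i = ∑ i', c (Fin.castLE hum i') * w' i' := by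
  have h1 : ∑ i', c (Fin.castLE hum i') * w' i'
      = ∑ i ∈ (univ : Finset (Fin u)).map (Fin.castLEEmb hum),
          c i * extMap u m w' i := by
    rw [Finset.sum_map]
    refine Finset.sum_congr rfl fun i' _ => ?_
    rw [show ((Fin.castLEEmb hum) i') = Fin.castLE hum i' from rfl, extMap_castLE hum]
  rw [h1]
  refine (Finset.sum_subset (Finset.subset_univ _) fun i _ hi => ?_).symm
  have : ¬ (i : ℕ) < u := by
    intro h
    exact hi (Finset.mem_map.mpr ⟨⟨i, h⟩, Finset.mem_univ _, by simp [Fin.castLEEmb, Fin.castLE]⟩)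
  rw [extMap_supported _ _ (by omega), mul_zero]

end Helpers

/-- every nonzero codeword of the code generated by the rows of
`H_{u,m}` (the dual of the supplementary code `B_{u,m}`) has weight
`q^(m-1)` or `q^(m-1) - q^(u-1)`. -/
theorem supplementary_dual_two_weights
    {F : Type} [Field F] [Fintype F] [DecidableEq F]
    (q m u nu nB : ℕ) (hq : Fintype.card F = q) (hm : 1 < m)
    (hu1 : 1 ≤ u) (hum : u ≤ m - 1)
    (hnu : nu * (q - 1) = q ^ u - 1)
    (hn : (nu + nB) * (q - 1) = q ^ m - 1)
    (H : Matrix (Fin m) (Fin nu ⊕ Fin nB) F)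
    -- H is a parity-check matrix of the q-ary Hamming code of length nu + nB:
    (hcols : ∀ j, (fun i => H i j) ≠ 0)
    (hindep : ∀ j k, j ≠ k → ∀ a : F, (fun i => a * H i j) ≠ (fun i => H i k))
    (hmax : ∀ v : Fin m → F, v ≠ 0 → ∃ j, ∃ a : F, v = fun i => a * H i j)
    -- the first nu columns (forming H*_u) vanish on the last m - u coordinates
    (hvan : ∀ j : Fin nu, ∀ i : Fin m, u ≤ (i : ℕ) → H i (Sum.inl j) = 0)
    -- y is a nonzero codeword of the row space of H_{u,m}
    (c : Fin m → F) (y : Fin nB → F)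
    (hy : y = fun j => ∑ i, c i * H i (Sum.inr j)) (hy0 : y ≠ 0) :
    hammingNorm y = q ^ (m - 1) ∨ hammingNorm y = q ^ (m - 1) - q ^ (u - 1) := by
  classical
  subst hq
  subst hy
  set q := Fintype.card F with hqdef
  have hq2 : 2 ≤ q := Fintype.one_lt_card
  have hm1 : 1 ≤ m := by omega
  have hum' : u ≤ m := by omega
  have hc : c ≠ 0 := by
    rintro rfl
    exact hy0 (funext fun j => by simp)
  set imgs : (Fin nu ⊕ Fin nB) → Finset (Fin m → F) :=
    fun j => ((univ : Finset F).filter (· ≠ 0)).image fun a => (fun i => a * H i j)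
    with himgs
  have mem_imgs : ∀ (j) (w : Fin m → F),
      w ∈ imgs j ↔ ∃ a : F, a ≠ 0 ∧ w = (fun i => a * H i j) := by
    intro j w
    simp only [himgs, mem_image, mem_filter, mem_univ, true_and]
    constructor
    · rintro ⟨a, ha, rfl⟩; exact ⟨a, ha, rfl⟩
    · rintro ⟨a, ha, rfl⟩; exact ⟨a, ha, rfl⟩
  set S : Finset (Fin nu ⊕ Fin nB) :=
    univ.filter (fun j => ∑ i, c i * H i j ≠ 0) with hS
  set Sl : Finset (Fin nu) :=
    univ.filter (fun j => ∑ i, c i * H i (Sum.inl j) ≠ 0) with hSl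
  set Sr : Finset (Fin nB) :=
    univ.filter (fun j => ∑ i, c i * H i (Sum.inr j) ≠ 0) with hSr
  have dot_smul : ∀ (a : F) (j), (∑ i, c i * (a * H i j)) = a * ∑ i, c i * H i j := by
    intro a j
    rw [Finset.mul_sum]
    exact Finset.sum_congr rfl fun i _ => by ring
  have step1 : S.card = q ^ (m - 1) := by
    have hT : (univ.filter fun w : Fin m → F => ∑ i, c i * w i ≠ 0)
        = S.biUnion imgs := by
      ext w
      constructor
      · intro hw
        have hw' := (Finset.mem_filter.mp hw).2
        have hw0 : w ≠ 0 := by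
          rintro rfl; exact hw' (by simp)
        obtain ⟨j, a, rfl⟩ := hmax w hw0
        have ha : a ≠ 0 := by
          rintro rfl; exact hw0 (funext fun i => by simp)
        refine Finset.mem_biUnion.mpr ⟨j, Finset.mem_filter.mpr ⟨mem_univ j, ?_⟩,
          (mem_imgs j _).mpr ⟨a, ha, rfl⟩⟩
        intro h0
        apply hw'
        rw [dot_smul, h0, mul_zero]
      · intro hw
        obtain ⟨j, hj, hwj⟩ := Finset.mem_biUnion.mp hw
        obtain ⟨a, ha, rfl⟩ := (mem_imgs j _).mp hwj
        refine Finset.mem_filter.mpr ⟨mem_univ _, ?_⟩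
        rw [dot_smul]
        exact mul_ne_zero ha (Finset.mem_filter.mp hj).2
    have h1 : (univ.filter fun w : Fin m → F => ∑ i, c i * w i ≠ 0).card
        = S.card * (q - 1) := by
      rw [hT]
      exact card_scalar_biUnion (fun j i => H i j) hcols hindep S
    rw [card_dot_ne_zero c hc] at h1
    have h2 : q ^ m - q ^ (m - 1) = q ^ (m - 1) * (q - 1) := by
      rw [Nat.mul_sub, mul_one, ← pow_succ, Nat.sub_add_cancel hm1]
    rw [← hqdef, h2] at h1
    exact (Nat.eq_of_mul_eq_mul_right (by omega) h1).symm
  have no_right : ∀ j' : Fin nB,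
      ¬ (∀ i : Fin m, u ≤ (i : ℕ) → H i (Sum.inr j') = 0) := by
    intro j' hsup
    set K : Finset (Fin nu ⊕ Fin nB) :=
      (univ.image Sum.inl) ∪ {Sum.inr j'} with hK
    have hKcard : K.card = nu + 1 := by
      rw [hK, Finset.card_union_of_disjoint (by simp),
        Finset.card_image_of_injective _ Sum.inl_injective, card_univ,
        Fintype.card_fin, Finset.card_singleton]
    have hsub : K.biUnion imgs ⊆
        ((univ : Finset (Fin u → F)).filter (· ≠ 0)).image (extMap u m) := by
      intro w hw
      obtain ⟨j, hjK, hwj⟩ := Finset.mem_biUnion.mp hw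
      obtain ⟨a, ha, rfl⟩ := (mem_imgs j _).mp hwj
      have hws : ∀ i : Fin m, u ≤ (i : ℕ) → a * H i j = 0 := by
        intro i hi
        rcases j with j | j
        · rw [hvan j i hi, mul_zero]
        · have : j = j' := by
            simp only [hK, Finset.mem_union, Finset.mem_image, mem_univ,
              Finset.mem_singleton, true_and] at hjK
            rcases hjK with ⟨x, h⟩ | h
            · exact absurd h (by simp)
            · exact Sum.inr_injective h
          rw [this, hsup i hi, mul_zero]
      have hw0 : (fun i => a * H i j) ≠ (0 : Fin m → F) := by
        intro h0
        apply hcols j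
        funext i
        have := congrFun h0 i
        simp only [Pi.zero_apply] at this ⊢
        exact (mul_eq_zero.mp this).resolve_left ha
      rw [eq_extMap_of_supported hum' _ hws]
      refine Finset.mem_image.mpr ⟨_, Finset.mem_filter.mpr ⟨mem_univ _, ?_⟩, rfl⟩
      intro h0
      apply hw0
      rw [eq_extMap_of_supported hum' _ hws, h0]
      funext i
      simp [extMap]
    have hcard1 : (K.biUnion imgs).card = (nu + 1) * (q - 1) := by
      rw [himgs, card_scalar_biUnion (fun j i => H i j) hcols hindep K, hKcard]
    have hcard2 : (((univ : Finset (Fin u → F)).filter (· ≠ 0)).image (extMap u m)).card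
        = q ^ u - 1 := by
      rw [Finset.card_image_of_injective _ (extMap_inj hum'), Finset.filter_ne',
        Finset.card_erase_of_mem (mem_univ 0), card_univ]
      simp [hqdef]
    have hle := Finset.card_le_card hsub
    rw [hcard1, hcard2, ← hnu, add_mul, one_mul] at hle
    omega
  set c' : Fin u → F := fun i' => c (Fin.castLE hum' i') with hc'
  have dotc' : ∀ w' : Fin u → F, ∑ i, c i * extMap u m w' i = ∑ i', c' i' * w' i' :=
    fun w' => dot_extMap hum' c w'
  have step2 : Sl.card = (if c' = 0 then 0 else q ^ (u - 1)) := by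
    have hTl : (univ.filter fun w : Fin m → F =>
          (∀ i : Fin m, u ≤ (i : ℕ) → w i = 0) ∧ ∑ i, c i * w i ≠ 0)
        = Sl.biUnion (fun j => imgs (Sum.inl j)) := by
      ext w
      constructor
      · intro hw
        obtain ⟨hwsup, hwdot⟩ := (Finset.mem_filter.mp hw).2
        have hw0 : w ≠ 0 := by
          rintro rfl; exact hwdot (by simp)
        obtain ⟨j, a, rfl⟩ := hmax w hw0
        have ha : a ≠ 0 := by
          rintro rfl; exact hw0 (funext fun i => by simp)
        have hHsup : ∀ i : Fin m, u ≤ (i : ℕ) → H i j = 0 := by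
          intro i hi
          exact (mul_eq_zero.mp (hwsup i hi)).resolve_left ha
        obtain ⟨j0, rfl⟩ : ∃ j0 : Fin nu, j = Sum.inl j0 := by
          rcases j with j0 | j'
          · exact ⟨j0, rfl⟩
          · exact absurd hHsup (no_right j')
        refine Finset.mem_biUnion.mpr ⟨j0, Finset.mem_filter.mpr ⟨mem_univ _, ?_⟩,
          (mem_imgs _ _).mpr ⟨a, ha, rfl⟩⟩
        intro h0
        apply hwdot
        rw [dot_smul, h0, mul_zero]
      · intro hw
        obtain ⟨j0, hj, hwj⟩ := Finset.mem_biUnion.mp hw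
        obtain ⟨a, ha, rfl⟩ := (mem_imgs _ _).mp hwj
        refine Finset.mem_filter.mpr ⟨mem_univ _,
          fun i hi => by show a * H i (Sum.inl j0) = 0; rw [hvan j0 i hi, mul_zero], ?_⟩
        rw [dot_smul]
        exact mul_ne_zero ha (Finset.mem_filter.mp hj).2
    have hTl2 : (univ.filter fun w : Fin m → F =>
          (∀ i : Fin m, u ≤ (i : ℕ) → w i = 0) ∧ ∑ i, c i * w i ≠ 0)
        = ((univ : Finset (Fin u → F)).filter
            (fun w' => ∑ i', c' i' * w' i' ≠ 0)).image (extMap u m) := by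
      ext w
      constructor
      · intro hw
        obtain ⟨hwsup, hwdot⟩ := (Finset.mem_filter.mp hw).2
        refine Finset.mem_image.mpr ⟨fun i' => w (Fin.castLE hum' i'),
          Finset.mem_filter.mpr ⟨mem_univ _, ?_⟩,
          (eq_extMap_of_supported hum' w hwsup).symm⟩
        rw [← dotc', ← eq_extMap_of_supported hum' w hwsup]
        exact hwdot
      · intro hw
        obtain ⟨w', hw', rfl⟩ := Finset.mem_image.mp hw
        refine Finset.mem_filter.mpr ⟨mem_univ _,
          fun i hi => extMap_supported w' i hi, ?_⟩
        rw [dotc']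
        exact (Finset.mem_filter.mp hw').2
    have hcards : Sl.card * (q - 1)
        = ((univ : Finset (Fin u → F)).filter
            (fun w' => ∑ i', c' i' * w' i' ≠ 0)).card := by
      rw [← Finset.card_image_of_injective _ (extMap_inj (F := F) hum'), ← hTl2, hTl]
      have hres := card_scalar_biUnion (F := F)
        (fun j0 : Fin nu => fun i => H i (Sum.inl j0))
        (fun j0 => hcols (Sum.inl j0))
        (fun j0 k0 hne a => hindep (Sum.inl j0) (Sum.inl k0) (by simpa using hne) a) Sl
      rw [← hqdef] at hres
      exact hres.symm
    by_cases hc0 : c' = 0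
    · rw [if_pos hc0]
      have hemp : ((univ : Finset (Fin u → F)).filter
          (fun w' => ∑ i', c' i' * w' i' ≠ 0)) = ∅ := by
        refine Finset.filter_false_of_mem fun w' _ => ?_
        simp [hc0]
      rw [hemp, Finset.card_empty] at hcards
      rcases Nat.mul_eq_zero.mp hcards with h | h
      · exact h
      · omega
    · rw [if_neg hc0]
      rw [card_dot_ne_zero c' hc0] at hcards
      have h2 : q ^ u - q ^ (u - 1) = q ^ (u - 1) * (q - 1) := by
        rw [Nat.mul_sub, mul_one, ← pow_succ, Nat.sub_add_cancel hu1]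
      rw [← hqdef, h2] at hcards
      exact Nat.eq_of_mul_eq_mul_right (by omega) hcards
  have split : S.card = Sl.card + Sr.card := by
    have hsplit : S = (Sl.map ⟨Sum.inl, Sum.inl_injective⟩)
        ∪ (Sr.map ⟨Sum.inr, Sum.inr_injective⟩) := by
      ext j
      rcases j with j | j <;> simp [hS, hSl, hSr]
    rw [hsplit, Finset.card_union_of_disjoint, Finset.card_map, Finset.card_map]
    rw [Finset.disjoint_left]
    rintro j hjl hjr
    obtain ⟨j0, -, rfl⟩ := Finset.mem_map.mp hjl
    obtain ⟨j1, -, h⟩ := Finset.mem_map.mp hjr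
    exact absurd h (by simp)
  have hham : hammingNorm (fun j => ∑ i, c i * H i (Sum.inr j)) = Sr.card := rfl
  rw [hham]
  by_cases hc0 : c' = 0
  · left
    rw [if_pos hc0] at step2
    omega
  · right
    rw [if_neg hc0] at step2
    have hle : q ^ (u - 1) ≤ q ^ (m - 1) := Nat.pow_le_pow_right (by omega) (by omega)
    omega
end

section
/- The monomial automorphism group of B_{u,m} acts transitively on the set of one-weight vectors of F_q^{n_B}; equivalently, for any two columns h_i, h_j of H_{u,m} and any nonzero λ ∈ F_q, there is a monomial automorphism of the dual code B_{u,m}^⊥ (induced by an invertible block upper-triangular m×m matrix) sending h_i to λ h_j. -/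
private lemma exists_isUnit_mulVec_eq {F : Type} [Field F] [DecidableEq F] {d : ℕ}
    (y w : Fin d → F) (hy : y ≠ 0) (hw : w ≠ 0) :
    ∃ M : Matrix (Fin d) (Fin d) F, IsUnit M ∧ M.mulVec y = w := by
  classical
  obtain ⟨iy, hiy⟩ := Function.ne_iff.mp hy
  obtain ⟨iw, hiw⟩ := Function.ne_iff.mp hw
  simp only [Pi.zero_apply] at hiy hiw
  set Py : Matrix (Fin d) (Fin d) F := (1 : Matrix (Fin d) (Fin d) F).updateCol iy y with hPy
  set Pw : Matrix (Fin d) (Fin d) F := (1 : Matrix (Fin d) (Fin d) F).updateCol iw w with hPw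
  have hdetPy : Py.det = y iy := by
    rw [hPy, ← Matrix.cramer_apply]
    simp [Matrix.cramer_one]
  have hdetPw : Pw.det = w iw := by
    rw [hPw, ← Matrix.cramer_apply]
    simp [Matrix.cramer_one]
  have hPyu : IsUnit Py := (Matrix.isUnit_iff_isUnit_det _).mpr (by rw [hdetPy]; exact hiy.isUnit)
  have hPwu : IsUnit Pw := (Matrix.isUnit_iff_isUnit_det _).mpr (by rw [hdetPw]; exact hiw.isUnit)
  have hSS : ((Equiv.swap iw iy).toPEquiv.toMatrix : Matrix (Fin d) (Fin d) F) *
      (Equiv.swap iw iy).toPEquiv.toMatrix = 1 := by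
    rw [← PEquiv.toMatrix_trans, ← Equiv.toPEquiv_trans, Equiv.swap_swap, Equiv.toPEquiv_refl,
      PEquiv.toMatrix_refl]
  have hSu : IsUnit ((Equiv.swap iw iy).toPEquiv.toMatrix : Matrix (Fin d) (Fin d) F) :=
    ⟨⟨_, _, hSS, hSS⟩, rfl⟩
  have hPy_single : Py.mulVec (Pi.single iy 1) = y := by
    funext r
    simp [hPy, Matrix.mulVec_single, Matrix.updateCol_self]
  have hPw_single : Pw.mulVec (Pi.single iw 1) = w := by
    funext r
    simp [hPw, Matrix.mulVec_single, Matrix.updateCol_self]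
  have hS_single : ((Equiv.swap iw iy).toPEquiv.toMatrix : Matrix (Fin d) (Fin d) F).mulVec
      (Pi.single iy 1) = Pi.single iw 1 := by
    funext r
    simp only [Matrix.mulVec_single, mul_one, PEquiv.toMatrix_toPEquiv_apply,
      Matrix.one_apply, Pi.single_apply]
    by_cases h : r = iw
    · subst h; simp [Equiv.swap_apply_left]
    · have h2 : Equiv.swap iw iy r ≠ iy := by
        intro hc
        apply h
        have := congrArg (Equiv.swap iw iy).symm hc
        simpa [Equiv.symm_apply_apply, Equiv.symm_swap, Equiv.swap_apply_right] using this
      simp [h, h2]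
  have hdet : IsUnit Py.det := (Matrix.isUnit_iff_isUnit_det _).mp hPyu
  have hinvu : IsUnit Py⁻¹ := Matrix.isUnit_nonsing_inv_iff.mpr hPyu
  have hinv : Py⁻¹.mulVec y = Pi.single iy 1 := by
    rw [← hPy_single, Matrix.mulVec_mulVec, Matrix.nonsing_inv_mul _ hdet, Matrix.one_mulVec]
  refine ⟨Pw * (Equiv.swap iw iy).toPEquiv.toMatrix * Py⁻¹, (hPwu.mul hSu).mul hinvu, ?_⟩
  rw [← Matrix.mulVec_mulVec, ← Matrix.mulVec_mulVec, hinv, hS_single, hPw_single]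


/-- the monomial automorphism group of `B_{u,m}` is transitive on the
one-weight vectors: for any two columns `h_i, h_j` of `H_{u,m}` and any nonzero
`λ ∈ F_q` there is an invertible block upper-triangular `m × m` matrix which
stabilizes the set of columns of `H_{u,m}` up to nonzero scalars (hence induces a
monomial automorphism of `B_{u,m}`) and sends `h_i` to `λ·h_j`. -/
theorem supplementary_code_monomially_transitive
    {F : Type} [Field F] [Fintype F] [DecidableEq F]
    (q m u nu nB : ℕ) (hq : Fintype.card F = q) (hm : 1 < m)
    (hu1 : 1 ≤ u) (hum : u ≤ m - 1)
    (hnu : nu * (q - 1) = q ^ u - 1)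
    (hn : (nu + nB) * (q - 1) = q ^ m - 1)
    (H : Matrix (Fin m) (Fin nu ⊕ Fin nB) F)
    (hcols : ∀ j, (fun i => H i j) ≠ 0)
    (hindep : ∀ j k, j ≠ k → ∀ a : F, (fun i => a * H i j) ≠ (fun i => H i k))
    (hmax : ∀ v : Fin m → F, v ≠ 0 → ∃ j, ∃ a : F, v = fun i => a * H i j)
    (hvan : ∀ j : Fin nu, ∀ i : Fin m, u ≤ (i : ℕ) → H i (Sum.inl j) = 0)
    (j₁ j₂ : Fin nB) (lam : F) (hlam : lam ≠ 0) :
    ∃ T : Matrix (Fin m) (Fin m) F,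
      IsUnit T ∧
      -- block upper-triangular: the lower-left (m-u) × u block vanishes
      (∀ i i' : Fin m, u ≤ (i : ℕ) → (i' : ℕ) < u → T i i' = 0) ∧
      -- T stabilizes the set of columns of H_{u,m} up to nonzero scalars
      (∀ k : Fin nB, ∃ k' : Fin nB, ∃ a : F, a ≠ 0 ∧
        T.mulVec (fun i => H i (Sum.inr k)) = fun i => a * H i (Sum.inr k')) ∧
      -- T sends the column h_{j₁} to λ·h_{j₂}
      T.mulVec (fun i => H i (Sum.inr j₁)) = fun i => lam * H i (Sum.inr j₂) := by
  classical
  have hum' : u < m := by omega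
  have hdm : u + (m - u) = m := by omega
  set d := m - u with hd
  -- STEP 1 (counting): every column of H_{u,m} has a nonzero entry in a row i with u ≤ i
  have hkey : ∀ k : Fin nB, ∃ i : Fin m, u ≤ (i : ℕ) ∧ H i (Sum.inr k) ≠ 0 := by
    intro k
    by_contra hcon
    push_neg at hcon
    set v : Fin m → F := fun i => H i (Sum.inr k) with hv
    have hvne : v ≠ 0 := hcols (Sum.inr k)
    set Z : Finset (Fin m → F) :=
      Finset.univ.filter (fun w : Fin m → F => ∀ i : Fin m, u ≤ (i : ℕ) → w i = 0) with hZdef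
    have hZcard : Z.card = q ^ u := by
      have hb : Z.card = (Finset.univ : Finset (Fin u → F)).card := by
        refine Finset.card_bij'
          (fun w _ => fun j : Fin u => w (Fin.castLE (le_of_lt hum') j))
          (fun f _ => fun i : Fin m => if h : (i : ℕ) < u then f ⟨i, h⟩ else 0)
          (fun w hw => Finset.mem_univ _) (fun f hf => ?_) (fun w hw => ?_) (fun f hf => ?_)
        · simp only [hZdef, Finset.mem_filter, Finset.mem_univ, true_and]
          intro i hi
          rw [dif_neg (by omega)]
        · simp only [hZdef, Finset.mem_filter, Finset.mem_univ, true_and] at hw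
          funext i
          dsimp only
          by_cases h : (i : ℕ) < u
          · rw [dif_pos h]
            exact congrArg w (Fin.ext rfl)
          · rw [dif_neg h]
            exact (hw i (by omega)).symm
        · funext j
          dsimp only
          rw [dif_pos (by exact j.isLt : ((Fin.castLE (le_of_lt hum') j : Fin m) : ℕ) < u)]
          exact congrArg f (Fin.ext rfl)
      rw [hb, Finset.card_univ, Fintype.card_fun, hq, Fintype.card_fin]
    have h0Z : (0 : Fin m → F) ∈ Z := by
      simp [hZdef]
    have hScard : (Z.erase 0).card = q ^ u - 1 := by
      rw [Finset.card_erase_of_mem h0Z, hZcard]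
    set T0 : Finset (Fin nu × F) :=
      Finset.univ ×ˢ (Finset.univ.filter (fun a : F => a ≠ 0)) with hT0
    have hT0card : T0.card = nu * (q - 1) := by
      rw [hT0, Finset.card_product, Finset.card_univ, Fintype.card_fin]
      congr 1
      rw [Finset.filter_ne', Finset.card_erase_of_mem (Finset.mem_univ 0), Finset.card_univ, hq]
    set ψ : Fin nu × F → (Fin m → F) := fun p => fun i => p.2 * H i (Sum.inl p.1) with hψ
    have hinj : Set.InjOn ψ T0 := by
      rintro ⟨j, a⟩ h1 ⟨j', a'⟩ h2 heq
      simp only [hT0, Finset.coe_product, Set.mem_prod, Finset.coe_filter,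
        Set.mem_setOf_eq, Finset.mem_univ, true_and, Finset.coe_univ, Set.mem_univ] at h1 h2
      have ha : a ≠ 0 := h1
      have ha' : a' ≠ 0 := h2
      have hjj : j = j' := by
        by_contra hne
        refine hindep (Sum.inl j) (Sum.inl j') (by simpa using hne) (a'⁻¹ * a) ?_
        funext i
        have hthis := congrFun heq i
        simp only [hψ] at hthis
        rw [mul_assoc, hthis, ← mul_assoc, inv_mul_cancel₀ ha', one_mul]
      subst hjj
      obtain ⟨i0, hi0⟩ := Function.ne_iff.mp (hcols (Sum.inl j))
      simp only [Pi.zero_apply] at hi0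
      have := congrFun heq i0
      simp only [hψ] at this
      have haa : a = a' := by
        exact mul_right_cancel₀ hi0 this
      simp [haa]
    have hImsub : T0.image ψ ⊆ Z.erase 0 := by
      intro w hw
      obtain ⟨⟨j, a⟩, hmem, rfl⟩ := Finset.mem_image.mp hw
      simp only [hT0, Finset.mem_product, Finset.mem_filter, Finset.mem_univ, true_and] at hmem
      rw [Finset.mem_erase]
      constructor
      · intro h0
        refine hcols (Sum.inl j) ?_
        funext i
        have := congrFun h0 i
        simp only [hψ, Pi.zero_apply] at this
        simpa using (mul_eq_zero.mp this).resolve_left hmem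
      · simp only [hZdef, Finset.mem_filter, Finset.mem_univ, true_and]
        intro i hi
        simp [hψ, hvan j i hi]
    have hImcard : (T0.image ψ).card = q ^ u - 1 := by
      rw [Finset.card_image_of_injOn hinj, hT0card, hnu]
    have hImeq : T0.image ψ = Z.erase 0 :=
      Finset.eq_of_subset_of_card_le hImsub (by rw [hImcard, hScard])
    have hvmem : v ∈ Z.erase 0 := by
      rw [Finset.mem_erase]
      refine ⟨hvne, ?_⟩
      simp only [hZdef, Finset.mem_filter, Finset.mem_univ, true_and]
      exact hcon
    rw [← hImeq] at hvmem
    obtain ⟨⟨j, a⟩, hmem, hja⟩ := Finset.mem_image.mp hvmem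
    exact hindep (Sum.inl j) (Sum.inr k) (by simp) a hja
  -- STEP 2: the index equivalence
  set e : Fin m ≃ Fin u ⊕ Fin d := (finSumFinEquiv.trans (finCongr hdm)).symm with he
  have he_inl : ∀ j : Fin u, ((e.symm (Sum.inl j) : Fin m) : ℕ) = (j : ℕ) := by
    intro j; simp [he]
  have he_inr : ∀ r : Fin d, ((e.symm (Sum.inr r) : Fin m) : ℕ) = u + (r : ℕ) := by
    intro r; simp [he]
  have he_of_le : ∀ i : Fin m, u ≤ (i : ℕ) → ∃ r : Fin d, e i = Sum.inr r := by
    intro i hi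
    rcases h : e i with j | r
    · exfalso
      have : e.symm (Sum.inl j) = i := by rw [← h, Equiv.symm_apply_apply]
      have := congrArg (fun z : Fin m => (z : ℕ)) this
      rw [he_inl j] at this
      omega
    · exact ⟨r, rfl⟩
  have he_of_lt : ∀ i : Fin m, (i : ℕ) < u → ∃ j : Fin u, e i = Sum.inl j := by
    intro i hi
    rcases h : e i with j | r
    · exact ⟨j, rfl⟩
    · exfalso
      have : e.symm (Sum.inr r) = i := by rw [← h, Equiv.symm_apply_apply]
      have := congrArg (fun z : Fin m => (z : ℕ)) this
      rw [he_inr r] at this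
      omega
  -- upper/lower parts of a vector
  set xp : (Fin m → F) → (Fin u → F) := fun v j => v (e.symm (Sum.inl j)) with hxp
  set yp : (Fin m → F) → (Fin d → F) := fun v r => v (e.symm (Sum.inr r)) with hyp
  have hsplit : ∀ v : Fin m → F, v ∘ e.symm = Sum.elim (xp v) (yp v) := by
    intro v; funext s; rcases s with j | r <;> rfl
  -- lower parts of the inr-columns are nonzero
  have hlow : ∀ k : Fin nB, yp (fun i => H i (Sum.inr k)) ≠ 0 := by
    intro k
    obtain ⟨i, hiu, hiH⟩ := hkey k
    have hr : (i : ℕ) - u < d := by omega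
    refine Function.ne_iff.mpr ⟨⟨(i : ℕ) - u, hr⟩, ?_⟩
    have : e.symm (Sum.inr ⟨(i : ℕ) - u, hr⟩) = i := by
      apply Fin.ext
      rw [he_inr]
      simp
      omega
    simp only [hyp, this, Pi.zero_apply]
    exact hiH
  set h1 : Fin m → F := fun i => H i (Sum.inr j₁) with hh1
  set h2 : Fin m → F := fun i => H i (Sum.inr j₂) with hh2
  have hy1 : yp h1 ≠ 0 := hlow j₁
  have hy2 : yp h2 ≠ 0 := hlow j₂
  have hw2 : (fun r => lam * yp h2 r) ≠ 0 := by
    refine Function.ne_iff.mpr ?_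
    obtain ⟨r, hr⟩ := Function.ne_iff.mp hy2
    exact ⟨r, by simp only [Pi.zero_apply] at hr ⊢; exact mul_ne_zero hlam hr⟩
  obtain ⟨M, hMu, hMy⟩ := exists_isUnit_mulVec_eq (yp h1) (fun r => lam * yp h2 r) hy1 hw2
  -- the matrix N
  obtain ⟨r0, hr0⟩ := Function.ne_iff.mp hy1
  simp only [Pi.zero_apply] at hr0
  set N : Matrix (Fin u) (Fin d) F :=
    Matrix.of (fun p c => if c = r0 then (lam * xp h2 p - xp h1 p) * (yp h1 r0)⁻¹ else 0) with hN
  have hNy : N.mulVec (yp h1) = fun p => lam * xp h2 p - xp h1 p := by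
    funext p
    simp only [hN, Matrix.mulVec, dotProduct, Matrix.of_apply, ite_mul, zero_mul]
    rw [Finset.sum_ite_eq' Finset.univ r0]
    rw [if_pos (Finset.mem_univ r0)]
    rw [mul_assoc, inv_mul_cancel₀ hr0, mul_one]
  set B : Matrix (Fin u ⊕ Fin d) (Fin u ⊕ Fin d) F :=
    Matrix.fromBlocks (1 : Matrix (Fin u) (Fin u) F) N 0 M with hB
  refine ⟨B.submatrix e e, ?_, ?_, ?_, ?_⟩
  · rw [Matrix.isUnit_iff_isUnit_det, Matrix.det_submatrix_equiv_self, hB,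
      Matrix.det_fromBlocks_zero₂₁, Matrix.det_one, one_mul]
    exact (Matrix.isUnit_iff_isUnit_det M).mp hMu
  · intro i i' hi hi'
    obtain ⟨r, hr⟩ := he_of_le i hi
    obtain ⟨j, hj⟩ := he_of_lt i' hi'
    rw [Matrix.submatrix_apply, hr, hj, hB, Matrix.fromBlocks_apply₂₁]
    rfl
  · intro k
    set hk : Fin m → F := fun i => H i (Sum.inr k) with hhk
    have hTk : (B.submatrix e e).mulVec hk =
        (Sum.elim (xp hk + N.mulVec (yp hk)) (M.mulVec (yp hk))) ∘ e := by
      rw [Matrix.submatrix_mulVec_equiv, hsplit hk, hB, Matrix.fromBlocks_mulVec]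
      simp [Matrix.one_mulVec, Matrix.zero_mulVec]
    -- M.mulVec (yp hk) ≠ 0
    have hMinj : ∀ z : Fin d → F, M.mulVec z = 0 → z = 0 := by
      intro z hz
      have hdet : IsUnit M.det := (Matrix.isUnit_iff_isUnit_det M).mp hMu
      have := congrArg (fun w => M⁻¹.mulVec w) hz
      simpa [Matrix.mulVec_mulVec, Matrix.nonsing_inv_mul _ hdet, Matrix.one_mulVec,
        Matrix.mulVec_zero] using this
    have hMz : M.mulVec (yp hk) ≠ 0 := fun hc => hlow k (hMinj _ hc)
    obtain ⟨r1, hr1⟩ := Function.ne_iff.mp hMz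
    simp only [Pi.zero_apply] at hr1
    have hTne : (B.submatrix e e).mulVec hk ≠ 0 := by
      refine Function.ne_iff.mpr ⟨e.symm (Sum.inr r1), ?_⟩
      rw [hTk]
      simp only [Function.comp_apply, Equiv.apply_symm_apply, Sum.elim_inr, Pi.zero_apply]
      exact hr1
    obtain ⟨jj, a, hTv⟩ := hmax _ hTne
    have ha : a ≠ 0 := by
      intro h0
      apply hTne
      rw [hTv]
      funext i
      simp [h0]
    rcases jj with j' | k'
    · exfalso
      have hval : ((B.submatrix e e).mulVec hk) (e.symm (Sum.inr r1)) ≠ 0 := by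
        rw [hTk]
        simp only [Function.comp_apply, Equiv.apply_symm_apply, Sum.elim_inr]
        exact hr1
      apply hval
      rw [hTv]
      have : u ≤ ((e.symm (Sum.inr r1) : Fin m) : ℕ) := by rw [he_inr]; omega
      simp [hvan j' _ this]
    · exact ⟨k', a, ha, hTv⟩
  · have hTk : (B.submatrix e e).mulVec h1 =
        (Sum.elim (xp h1 + N.mulVec (yp h1)) (M.mulVec (yp h1))) ∘ e := by
      rw [Matrix.submatrix_mulVec_equiv, hsplit h1, hB, Matrix.fromBlocks_mulVec]
      simp [Matrix.one_mulVec, Matrix.zero_mulVec]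
    rw [hTk]
    funext i
    rcases h : e i with j | r
    · have hi : e.symm (Sum.inl j) = i := by rw [← h, Equiv.symm_apply_apply]
      simp only [Function.comp_apply, h, Sum.elim_inl, Pi.add_apply, hNy]
      rw [show xp h1 j + (lam * xp h2 j - xp h1 j) = lam * xp h2 j by ring]
      simp only [hxp, hi]
      rfl
    · have hi : e.symm (Sum.inr r) = i := by rw [← h, Equiv.symm_apply_apply]
      simp only [Function.comp_apply, h, Sum.elim_inr, hMy]
      simp only [hyp, hi]
      rfl
end
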